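/- Let n > 1. The function χ_κ : A_n(q) → ℂ defined by χ_κ(g) = q^{n−2}·θ(g_{1,n}) if g − 1 ∈ F_q·e_{1,n} and χ_κ(g) = 0 otherwise is a character of A_n(q), and it equals the sum of q^{n−2} distinct group homomorphisms A_n(q) → ℂ^×. -/

import Mathlib

open scoped BigOperators Classical ComplexOrder
open Complex

set_option linter.unusedSectionVars false

noncomputable section

namespace Paper

variable {F : Type*} [Field F]

/-! ### Characters of finite groups -/

/-- `f : G → ℂ` is the character of some finite-dimensional complex representation. -/
def IsCharacter {G : Type} [Monoid G] (f : G → ℂ) : Prop :=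
  ∃ V : FDRep ℂ G, V.character = f

/-- `f : G → ℂ` is the character of some irreducible finite-dimensional complex
representation. -/
def IsIrreducibleCharacter {G : Type} [Monoid G] (f : G → ℂ) : Prop :=
  ∃ V : FDRep ℂ G, CategoryTheory.Simple V ∧ V.character = f

/-- The standard inner product `⟨f, h⟩ = |G|⁻¹ ∑ₓ f x conj (h x)` on complex-valued
functions on a finite group. -/
def cinner (G : Type*) (f h : G → ℂ) : ℂ :=
  (Nat.card G : ℂ)⁻¹ * ∑ᶠ x : G, f x * (starRingEnd ℂ) (h x)

/-- Induction of a complex-valued function from (the subset underlying) a subgroup `H` of a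
finite group `G`, via the Frobenius formula
`Ind_H^G(f)(g) = |H|⁻¹ ∑_{x ∈ G, xgx⁻¹ ∈ H} f (xgx⁻¹)`. -/
def indFun {G : Type*} [Group G] (H : Set G) (f : G → ℂ) : G → ℂ := fun g =>
  (Nat.card H : ℂ)⁻¹ * ∑ᶠ x : G, if x * g * x⁻¹ ∈ H then f (x * g * x⁻¹) else 0

/-- The set of elements of the `m`-th cyclotomic field `ℚ(ζ_m) ⊆ ℂ`, where
`ζ_m = exp (2πi/m)`. -/
def cycField (m : ℕ) : Set ℂ :=
  (Algebra.adjoin ℚ {Complex.exp (2 * Real.pi * Complex.I / m)} : Subalgebra ℚ ℂ)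

/-! ### Algebra groups of matrix algebras -/

variable {n : ℕ}

/-- The subgroup `1 + S` of invertible matrices, for `S` a non-unital subalgebra of the
matrix algebra (for example the algebra of strictly upper triangular matrices). -/
def grp [Fintype F] (S : NonUnitalSubalgebra F (Matrix (Fin n) (Fin n) F)) :
    Subgroup (Matrix (Fin n) (Fin n) F)ˣ where
  carrier := {g | (g : Matrix (Fin n) (Fin n) F) - 1 ∈ S}
  one_mem' := by
    show ((1 : (Matrix (Fin n) (Fin n) F)ˣ) : Matrix (Fin n) (Fin n) F) - 1 ∈ S
    rw [Units.val_one, sub_self]; exact zero_mem S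
  mul_mem' := by
    intro a b ha hb
    show ((a * b : (Matrix (Fin n) (Fin n) F)ˣ) : Matrix (Fin n) (Fin n) F) - 1 ∈ S
    have h : ((a * b : (Matrix (Fin n) (Fin n) F)ˣ) : Matrix (Fin n) (Fin n) F) - 1 =
        ((a : Matrix (Fin n) (Fin n) F) - 1) + ((b : Matrix (Fin n) (Fin n) F) - 1) +
          ((a : Matrix (Fin n) (Fin n) F) - 1) * ((b : Matrix (Fin n) (Fin n) F) - 1) := by
      rw [Units.val_mul]; noncomm_ring
    rw [h]
    exact add_mem (add_mem ha hb) (mul_mem ha hb)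
  inv_mem' := by
    intro a ha
    show ((a⁻¹ : (Matrix (Fin n) (Fin n) F)ˣ) : Matrix (Fin n) (Fin n) F) - 1 ∈ S
    have hpow : ∀ m : ℕ, ((a ^ m : (Matrix (Fin n) (Fin n) F)ˣ) : Matrix (Fin n) (Fin n) F)
        - 1 ∈ S := by
      intro m
      induction m with
      | zero => rw [pow_zero, Units.val_one, sub_self]; exact zero_mem S
      | succ m ih =>
          rw [pow_succ, Units.val_mul]
          have h : ((a ^ m : (Matrix (Fin n) (Fin n) F)ˣ) : Matrix (Fin n) (Fin n) F) *
              (a : Matrix (Fin n) (Fin n) F) - 1 =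
              (((a ^ m : (Matrix (Fin n) (Fin n) F)ˣ) : Matrix (Fin n) (Fin n) F) - 1) +
              ((a : Matrix (Fin n) (Fin n) F) - 1) +
              (((a ^ m : (Matrix (Fin n) (Fin n) F)ˣ) : Matrix (Fin n) (Fin n) F) - 1) *
              ((a : Matrix (Fin n) (Fin n) F) - 1) := by noncomm_ring
          rw [h]
          exact add_mem (add_mem ih ha) (mul_mem ih ha)
    have hk : 0 < orderOf a := orderOf_pos a
    have hinv : a⁻¹ = a ^ (orderOf a - 1) := by
      have h1 : a ^ (orderOf a - 1) * a = 1 := by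
        rw [← pow_succ, Nat.sub_add_cancel hk, pow_orderOf_eq_one]
      exact (eq_inv_of_mul_eq_one_left h1).symm
    rw [hinv]
    exact hpow _

variable [Fintype F] {S : NonUnitalSubalgebra F (Matrix (Fin n) (Fin n) F)}

lemma mem_grp_iff {g : (Matrix (Fin n) (Fin n) F)ˣ} :
    g ∈ grp S ↔ (g : Matrix (Fin n) (Fin n) F) - 1 ∈ S := Iff.rfl

/-- The underlying matrix of an element of an algebra group. -/
def mat (g : ↥(grp S)) : Matrix (Fin n) (Fin n) F :=
  ((g : (Matrix (Fin n) (Fin n) F)ˣ) : Matrix (Fin n) (Fin n) F)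

lemma mat_mem (g : ↥(grp S)) : mat g - 1 ∈ S := g.2

/-- `g - 1` as an element of the algebra `S`. -/
def gsub (g : ↥(grp S)) : ↥S := ⟨mat g - 1, mat_mem g⟩

/-- The dual space of `F`-linear functionals on the algebra `S`. -/
abbrev Dual (S : NonUnitalSubalgebra F (Matrix (Fin n) (Fin n) F)) := ↥S →ₗ[F] F

/-- The function `θ_λ(g) = θ(λ(g-1))` on the algebra group `1 + S`. -/
def thetaFun (θ : AddChar F ℂ) (lam : Dual S) : ↥(grp S) → ℂ := fun g => θ (lam (gsub g))

lemma conj_mem (a b : ↥(grp S)) {X : Matrix (Fin n) (Fin n) F} (hX : X ∈ S) :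
    mat a * X * mat b ∈ S := by
  have h : mat a * X * mat b =
      X + (mat a - 1) * X + X * (mat b - 1) + (mat a - 1) * X * (mat b - 1) := by noncomm_ring
  rw [h]
  exact add_mem (add_mem (add_mem hX (mul_mem (mat_mem a) hX)) (mul_mem hX (mat_mem b)))
    (mul_mem (mul_mem (mat_mem a) hX) (mat_mem b))

/-- The functional `X ↦ λ(a · X · b)`, used to define the various actions of an algebra group
on the dual space of its algebra. -/
def conjDual (a b : ↥(grp S)) (lam : Dual S) : Dual S where
  toFun X := lam ⟨mat a * (X : Matrix (Fin n) (Fin n) F) * mat b, conj_mem a b X.2⟩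
  map_add' X Y := by
    rw [← map_add]
    exact congrArg lam (Subtype.ext (by simp [mul_add, add_mul]))
  map_smul' c X := by
    rw [RingHom.id_apply, ← map_smul]
    exact congrArg lam (Subtype.ext (by simp [Matrix.mul_smul, Matrix.smul_mul]))

/-- The left orbit `Gλ` of `λ` under `(gλ)(X) = λ(g⁻¹X)`. -/
def leftOrbit (lam : Dual S) : Set (Dual S) := {ν | ∃ g : ↥(grp S), ν = conjDual g⁻¹ 1 lam}

/-- The two-sided orbit `GλG` of `λ` under `(gλh)(X) = λ(g⁻¹Xh⁻¹)`. -/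
def biOrbit (lam : Dual S) : Set (Dual S) := {ν | ∃ g h : ↥(grp S), ν = conjDual g⁻¹ h⁻¹ lam}

/-- The coadjoint orbit of `λ` under `λ^g(X) = λ(gXg⁻¹)`. -/
def coadjOrbit (lam : Dual S) : Set (Dual S) := {ν | ∃ g : ↥(grp S), ν = conjDual g g⁻¹ lam}

/-- The supercharacter `χ_λ = (|Gλ|/|GλG|) ∑_{ν ∈ GλG} θ_ν`. -/
def superChar (θ : AddChar F ℂ) (lam : Dual S) : ↥(grp S) → ℂ := fun g =>
  ((Nat.card (leftOrbit lam) : ℂ) / (Nat.card (biOrbit lam) : ℂ)) *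
    ∑ᶠ ν ∈ biOrbit lam, thetaFun θ ν g

/-- The Kirillov function `ψ_λ = |λ^G|^{-1/2} ∑_{ν ∈ λ^G} θ_ν`. -/
def kirillov (θ : AddChar F ℂ) (lam : Dual S) : ↥(grp S) → ℂ := fun g =>
  ((Real.sqrt (Nat.card (coadjOrbit lam)) : ℂ))⁻¹ * ∑ᶠ ν ∈ coadjOrbit lam, thetaFun θ ν g


/-! ### The strictly upper triangular algebra -/

/-- The `F`-algebra of strictly upper triangular `n × n` matrices. -/
def uAlg (n : ℕ) (F : Type*) [Field F] :
    NonUnitalSubalgebra F (Matrix (Fin n) (Fin n) F) :=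
  Submodule.toNonUnitalSubalgebra
    { carrier := {M | ∀ i j : Fin n, j ≤ i → M i j = 0}
      add_mem' := fun ha hb i j hij => by
        rw [Matrix.add_apply, ha i j hij, hb i j hij, add_zero]
      zero_mem' := fun i j _ => rfl
      smul_mem' := fun c a ha i j hij => by
        rw [Matrix.smul_apply, ha i j hij, smul_zero] }
    (by
      intro X Y hX hY i j hij
      rw [Matrix.mul_apply]
      refine Finset.sum_eq_zero fun k _ => ?_
      by_cases hk : k ≤ i
      · rw [hX i k hk, zero_mul]
      · rw [hY k j (hij.trans (not_le.mp hk).le), mul_zero])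

lemma mem_uAlg {M : Matrix (Fin n) (Fin n) F} :
    M ∈ uAlg n F ↔ ∀ i j : Fin n, j ≤ i → M i j = 0 := Iff.rfl

/-! ### The chain of subspaces `l^i ⊆ ⋯ ⊆ s^i` attached to a linear functional -/

section Chain

variable {A : Type*} [NonUnitalRing A] [Module F A] [SMulCommClass F A A] [IsScalarTower F A A]

/-- For subspaces `s, t` of an algebra, the subspace `{x ∈ s | λ(x·t) = 0}`. -/
def lker (lam : A →ₗ[F] F) (s t : Submodule F A) : Submodule F A where
  carrier := {x | x ∈ s ∧ ∀ y ∈ t, lam (x * y) = 0}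
  add_mem' := fun ha hb => ⟨s.add_mem ha.1 hb.1, fun y hy => by
    rw [add_mul, map_add, ha.2 y hy, hb.2 y hy, add_zero]⟩
  zero_mem' := ⟨s.zero_mem, fun y _ => by rw [zero_mul, map_zero]⟩
  smul_mem' := fun c a ha => ⟨s.smul_mem c ha.1, fun y hy => by
    rw [smul_mul_assoc, map_smul, ha.2 y hy, smul_zero]⟩

/-- The pair of subspaces `(l^i, s^i)` defined inductively by `l⁰ = 0`, `s⁰ = n`,
`l^{i+1} = {X ∈ s^i : λ(X·s^i) = 0}`, `s^{i+1} = {X ∈ s^i : λ(X·l^{i+1}) = 0}`. -/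
def chain (lam : A →ₗ[F] F) : ℕ → Submodule F A × Submodule F A
  | 0 => (⊥, ⊤)
  | i + 1 =>
    (lker lam (chain lam i).2 (chain lam i).2,
     lker lam (chain lam i).2 (lker lam (chain lam i).2 (chain lam i).2))

/-- The subspace `l^i_λ`. -/
def lC (lam : A →ₗ[F] F) (i : ℕ) : Submodule F A := (chain lam i).1

/-- The subspace `s^i_λ`. -/
def sC (lam : A →ₗ[F] F) (i : ℕ) : Submodule F A := (chain lam i).2

/-- The terminal subspace `l̄_λ` of the ascending chain `l¹ ⊆ l² ⊆ ⋯`. -/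
def lbar (lam : A →ₗ[F] F) : Submodule F A := ⨆ i, lC lam i

/-- The terminal subspace `s̄_λ` of the descending chain `s¹ ⊇ s² ⊇ ⋯`. -/
def sbar (lam : A →ₗ[F] F) : Submodule F A := ⨅ i, sC lam i

end Chain

/-- The underlying set of the algebra subgroup `L̄_λ = 1 + l̄_λ`. -/
def Lset (lam : Dual S) : Set ↥(grp S) := {g | gsub g ∈ lbar lam}

/-- The underlying set of the algebra subgroup `S̄_λ = 1 + s̄_λ`. -/
def Sset (lam : Dual S) : Set ↥(grp S) := {g | gsub g ∈ sbar lam}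

/-- The character `ξ_λ = Ind_{L̄_λ}^G (θ_λ)`. -/
def xiChar (θ : AddChar F ℂ) (lam : Dual S) : ↥(grp S) → ℂ :=
  indFun (Lset lam) (thetaFun θ lam)

/-! ### Quasi-monomial functionals and shapes -/

/-- The value `λ_{ij} = λ(e_{ij})` (interpreted as `0` when `e_{ij} ∉ S`). -/
def lamEntry (lam : Dual S) (i j : Fin n) : F :=
  if h : Matrix.single i j (1 : F) ∈ S then lam ⟨_, h⟩ else 0

/-- A functional is quasi-monomial if the matrix `(λ_{ij})` has at most one nonzero entry in
each row and in each column. -/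
def QuasiMonomial (lam : Dual S) : Prop :=
  (∀ i j k : Fin n, lamEntry lam i j ≠ 0 → lamEntry lam i k ≠ 0 → j = k) ∧
  (∀ i j k : Fin n, lamEntry lam i k ≠ 0 → lamEntry lam j k ≠ 0 → i = j)

/-- The parts of the shape of `λ`: the equivalence classes of the finest equivalence
relation for which `i ∼ j` whenever `λ_{ij} ≠ 0`. -/
def shapeClasses (lam : Dual S) : Set (Set (Fin n)) :=
  {s | ∃ i : Fin n,
    s = {j | Relation.EqvGen (fun a b => lamEntry lam a b ≠ 0 ∨ lamEntry lam b a ≠ 0) i j}}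

/-! ### Explicit functionals -/

/-- The linear functional on `S` determined by a matrix `c` of coefficients:
`X ↦ ∑_{i,j} c_{ij} X_{ij}`; it sends the elementary matrix `e_{ij}` to `c_{ij}`. -/
def lamOf (S : NonUnitalSubalgebra F (Matrix (Fin n) (Fin n) F))
    (c : Matrix (Fin n) (Fin n) F) : Dual S where
  toFun X := ∑ i : Fin n, ∑ j : Fin n, c i j * (X : Matrix (Fin n) (Fin n) F) i j
  map_add' X Y := by
    simp [Matrix.add_apply, mul_add, Finset.sum_add_distrib]
  map_smul' a X := by
    simp only [RingHom.id_apply, smul_eq_mul, Finset.mul_sum]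
    refine Finset.sum_congr rfl fun i _ => Finset.sum_congr rfl fun j _ => ?_
    have : ((a • X : ↥S) : Matrix (Fin n) (Fin n) F) i j
        = a * (X : Matrix (Fin n) (Fin n) F) i j := by
      simp [Matrix.smul_apply]
    rw [this]; ring

/-- The coordinate functional `e*_{ij} : X ↦ X_{ij}` on `S`. -/
def coordFn (S : NonUnitalSubalgebra F (Matrix (Fin n) (Fin n) F))
    (a : Fin n × Fin n) : Dual S where
  toFun X := (X : Matrix (Fin n) (Fin n) F) a.1 a.2
  map_add' X Y := by simp
  map_smul' c X := by simp

/-- Matrix entry in (1-based) coordinates, `0` when out of range. -/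
def ent (X : Matrix (Fin n) (Fin n) F) (a : ℕ × ℕ) : F :=
  if h : 1 ≤ a.1 ∧ a.1 ≤ n ∧ 1 ≤ a.2 ∧ a.2 ≤ n then
    X ⟨a.1 - 1, by omega⟩ ⟨a.2 - 1, by omega⟩ else 0


/-! ### The specific functional `λ` on `u_{n}(q)` from Section 3.3 of the paper -/

/-- The coefficient matrix of the functional `λ` (positions written 1-based). -/
def lamCoef (r n : ℕ) (F : Type*) [Field F] : Matrix (Fin n) (Fin n) F := fun a b =>
  let j := (a : ℕ) + 1
  let k := (b : ℕ) + 1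
  if 1 ≤ j ∧ j ≤ r ∧ k = j + r then -1
  else if 1 ≤ j ∧ j ≤ r ∧ k = j + 2 * r then 1
  else if r + 1 ≤ j ∧ j ≤ 2 * r ∧ k = j + 2 * r + 1 then -1
  else if r + 1 ≤ j ∧ j ≤ 2 * r ∧ k = j + 3 * r + 1 then 1
  else if 2 * r + 1 ≤ j ∧ j ≤ 3 * r + 1 ∧ k = j + r then 1
  else if 3 * r + 2 ≤ j ∧ j ≤ 4 * r + 1 ∧ k = j + 2 * r then 1
  else 0

/-- The linear functional `λ ∈ u_n(q)*` of the paper, determined by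
`λ(e_{jk}) = -1` if `j = k - r ∈ [1,r]`, `λ(e_{jk}) = 1` if `j = k - 2r ∈ [1,r]`,
`λ(e_{jk}) = -1` if `j = k - 2r - 1 ∈ [r+1,2r]`, `λ(e_{jk}) = 1` if `j = k - 3r - 1 ∈ [r+1,2r]`,
`λ(e_{jk}) = 1` if `j = k - r ∈ [2r+1,3r+1]`, `λ(e_{jk}) = 1` if `j = k - 2r ∈ [3r+2,4r+1]`,
and `λ(e_{jk}) = 0` otherwise. -/
def lamStd (r n : ℕ) (F : Type*) [Field F] [Fintype F] : Dual (uAlg n F) :=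
  lamOf (uAlg n F) (lamCoef r n F)

/-! ### Pattern algebras -/

/-- A set of positions is closed when `(i,j) ∈ P` and `(j,k) ∈ P` imply `(i,k) ∈ P`. -/
def IsClosedPositions {n : ℕ} (P : Set (Fin n × Fin n)) : Prop :=
  ∀ i j k : Fin n, (i, j) ∈ P → (j, k) ∈ P → (i, k) ∈ P

/-- The subspace of matrices supported on a set `P` of positions. -/
def patSub (n : ℕ) (F : Type*) [Field F] (P : Set (Fin n × Fin n)) :
    Submodule F (Matrix (Fin n) (Fin n) F) where
  carrier := {M | ∀ i j : Fin n, (i, j) ∉ P → M i j = 0}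
  add_mem' := fun ha hb i j hij => by
    rw [Matrix.add_apply, ha i j hij, hb i j hij, add_zero]
  zero_mem' := fun i j _ => rfl
  smul_mem' := fun c a ha i j hij => by rw [Matrix.smul_apply, ha i j hij, smul_zero]

/-- The pattern algebra `u_{n,P}(q)` of matrices supported on a closed set `P` of
positions. -/
def patAlg (n : ℕ) (F : Type*) [Field F] (P : Set (Fin n × Fin n))
    (hC : IsClosedPositions P) : NonUnitalSubalgebra F (Matrix (Fin n) (Fin n) F) :=
  (patSub n F P).toNonUnitalSubalgebra (by
    intro X Y hX hY
    intro i j hij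
    rw [Matrix.mul_apply]
    refine Finset.sum_eq_zero fun k _ => ?_
    by_cases hik : (i, k) ∈ P
    · by_cases hkj : (k, j) ∈ P
      · exact absurd (hC i k j hik hkj) hij
      · rw [hY k j hkj, mul_zero]
    · rw [hX i k hik, zero_mul])


/-! ### The algebra `a_n(q)` of superdiagonal-constant strictly upper triangular matrices -/

/-- Membership condition for `a_n(q)` : strictly upper triangular, and constant along each
superdiagonal. -/
def aCond {n : ℕ} (M : Matrix (Fin n) (Fin n) F) : Prop :=
  (∀ i j : Fin n, j ≤ i → M i j = 0) ∧
  ∀ i j i' j' : Fin n, (i : ℕ) < j → (i' : ℕ) < j' →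
    (i : ℕ) + (j' : ℕ) = (i' : ℕ) + (j : ℕ) → M i j = M i' j'

lemma aCond_mul {n : ℕ} {X Y : Matrix (Fin n) (Fin n) F}
    (hX : aCond X) (hY : aCond Y) : aCond (X * Y) := by
  obtain ⟨hXu, hXc⟩ := hX
  obtain ⟨hYu, hYc⟩ := hY
  have hupper : ∀ i j : Fin n, j ≤ i → (X * Y) i j = 0 := by
    intro i j hij
    rw [Matrix.mul_apply]
    refine Finset.sum_eq_zero fun k _ => ?_
    by_cases hk : k ≤ i
    · rw [hXu i k hk, zero_mul]
    · rw [hYu k j (hij.trans (not_le.mp hk).le), mul_zero]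
  refine ⟨hupper, ?_⟩
  intro i j i' j' hij hij' hsum
  rw [Matrix.mul_apply, Matrix.mul_apply]
  have h1 : ∀ k : Fin n, ¬((i : ℕ) < (k : ℕ) ∧ (k : ℕ) < (j : ℕ)) → X i k * Y k j = 0 := by
    intro k hk
    by_cases h : (i : ℕ) < (k : ℕ)
    · have hjk : j ≤ k := by rw [Fin.le_def]; omega
      rw [hYu k j hjk, mul_zero]
    · have hki : k ≤ i := by rw [Fin.le_def]; omega
      rw [hXu i k hki, zero_mul]
  have h2 : ∀ k : Fin n, ¬((i' : ℕ) < (k : ℕ) ∧ (k : ℕ) < (j' : ℕ)) → X i' k * Y k j' = 0 := by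
    intro k hk
    by_cases h : (i' : ℕ) < (k : ℕ)
    · have hjk : j' ≤ k := by rw [Fin.le_def]; omega
      rw [hYu k j' hjk, mul_zero]
    · have hki : k ≤ i' := by rw [Fin.le_def]; omega
      rw [hXu i' k hki, zero_mul]
  have e1 : ∑ k : Fin n, X i k * Y k j
      = ∑ k ∈ Finset.univ.filter (fun k : Fin n => (i : ℕ) < (k : ℕ) ∧ (k : ℕ) < (j : ℕ)),
        X i k * Y k j := by
    refine (Finset.sum_filter_of_ne fun k _ hk => ?_).symm
    by_contra hp
    exact hk (h1 k hp)
  have e2 : ∑ k : Fin n, X i' k * Y k j'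
      = ∑ k ∈ Finset.univ.filter (fun k : Fin n => (i' : ℕ) < (k : ℕ) ∧ (k : ℕ) < (j' : ℕ)),
        X i' k * Y k j' := by
    refine (Finset.sum_filter_of_ne fun k _ hk => ?_).symm
    by_contra hp
    exact hk (h2 k hp)
  rw [e1, e2]
  refine Finset.sum_bij'
    (fun (k : Fin n) (hk : k ∈ Finset.univ.filter
        (fun k : Fin n => (i : ℕ) < (k : ℕ) ∧ (k : ℕ) < (j : ℕ))) =>
      (⟨(i' : ℕ) + ((k : ℕ) - (i : ℕ)), by
        have h1 := (Finset.mem_filter.mp hk).2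
        have h2 := j'.isLt
        omega⟩ : Fin n))
    (fun (m : Fin n) (hm : m ∈ Finset.univ.filter
        (fun m : Fin n => (i' : ℕ) < (m : ℕ) ∧ (m : ℕ) < (j' : ℕ))) =>
      (⟨(i : ℕ) + ((m : ℕ) - (i' : ℕ)), by
        have h1 := (Finset.mem_filter.mp hm).2
        have h2 := j.isLt
        omega⟩ : Fin n))
    ?_ ?_ ?_ ?_ ?_
  · intro k hk
    have h1 := (Finset.mem_filter.mp hk).2
    simp only [Finset.mem_filter, Finset.mem_univ, true_and]
    constructor
    · omega
    · omega
  · intro m hm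
    have h1 := (Finset.mem_filter.mp hm).2
    simp only [Finset.mem_filter, Finset.mem_univ, true_and]
    constructor
    · omega
    · omega
  · intro k hk
    have h1 := (Finset.mem_filter.mp hk).2
    exact Fin.ext (by simp only [Fin.val_mk]; omega)
  · intro m hm
    have h1 := (Finset.mem_filter.mp hm).2
    exact Fin.ext (by simp only [Fin.val_mk]; omega)
  · intro k hk
    have h1 := (Finset.mem_filter.mp hk).2
    have hx : X i k = X i' ⟨(i' : ℕ) + ((k : ℕ) - (i : ℕ)), by
        have h2 := j'.isLt; omega⟩ := by
      refine hXc i k i' _ h1.1 ?_ ?_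
      · simp only [Fin.val_mk]; omega
      · simp only [Fin.val_mk]; omega
    have hy : Y k j = Y ⟨(i' : ℕ) + ((k : ℕ) - (i : ℕ)), by
        have h2 := j'.isLt; omega⟩ j' := by
      refine hYc k j _ j' h1.2 ?_ ?_
      · simp only [Fin.val_mk]; omega
      · simp only [Fin.val_mk]; omega
    rw [hx, hy]

/-- The algebra `a_n(q)` of strictly upper triangular matrices that are constant along each
superdiagonal. -/
def aAlg (n : ℕ) (F : Type*) [Field F] [Fintype F] :
    NonUnitalSubalgebra F (Matrix (Fin n) (Fin n) F) :=
  Submodule.toNonUnitalSubalgebra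
    { carrier := {M | aCond M}
      add_mem' := by
        rintro a b ⟨hau, hac⟩ ⟨hbu, hbc⟩
        refine ⟨fun i j hij => by rw [Matrix.add_apply, hau i j hij, hbu i j hij, add_zero],
          fun i j i' j' h1 h2 h3 => ?_⟩
        rw [Matrix.add_apply, Matrix.add_apply, hac i j i' j' h1 h2 h3,
          hbc i j i' j' h1 h2 h3]
      zero_mem' := ⟨fun i j _ => rfl, fun _ _ _ _ _ _ _ => rfl⟩
      smul_mem' := by
        rintro c a ⟨hau, hac⟩
        refine ⟨fun i j hij => by rw [Matrix.smul_apply, hau i j hij, smul_zero],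
          fun i j i' j' h1 h2 h3 => ?_⟩
        rw [Matrix.smul_apply, Matrix.smul_apply, hac i j i' j' h1 h2 h3] }
    (fun X Y hX hY => aCond_mul hX hY)

lemma mem_aAlg {M : Matrix (Fin n) (Fin n) F} : M ∈ aAlg n F ↔ aCond M := Iff.rfl


/-- Iterated product `a * b₁ * ⋯ * b_k` of elements of a (non-unital) algebra. -/
def mulChain {A : Type*} [Mul A] : A → List A → A
  | a, [] => a
  | a, b :: l => mulChain (a * b) l

/-! ### Algebra groups of abstract nilpotent algebras, via the unitization -/

section AlgebraGroup

variable (F : Type) [Field F] (A : Type) [NonUnitalRing A] [Module F A]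
  [SMulCommClass F A A] [IsScalarTower F A A]

/-- The algebra `A` is nilpotent: some power `A^k` vanishes, i.e. all products of `k`
elements of `A` are zero. -/
def IsNilpotentAlgebra : Prop :=
  ∃ k : ℕ, ∀ (a : A) (l : List A), l.length + 1 = k → mulChain a l = 0

/-- The algebra group `G = 1 + A`, realized as the group of units of the unitization
`F ⊕ A` whose scalar component equals `1` (for `A` nilpotent these are exactly the
elements `1 + X`, `X ∈ A`). -/
def algGrp : Subgroup (Unitization F A)ˣ where
  carrier := {u | ((u : Unitization F A)).fst = 1}
  one_mem' := by simp
  mul_mem' := by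
    intro a b ha hb
    show ((a * b : (Unitization F A)ˣ) : Unitization F A).fst = 1
    rw [Units.val_mul, Unitization.fst_mul]
    rw [Set.mem_setOf_eq] at ha hb
    rw [ha, hb, one_mul]
  inv_mem' := by
    intro a ha
    rw [Set.mem_setOf_eq] at ha
    show ((a⁻¹ : (Unitization F A)ˣ) : Unitization F A).fst = 1
    have h : ((a : Unitization F A) * ((a⁻¹ : (Unitization F A)ˣ) : Unitization F A)).fst
        = (1 : Unitization F A).fst := by
      rw [Units.mul_inv]
    rw [Unitization.fst_mul, ha, one_mul, Unitization.fst_one] at h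
    exact h

variable {F A}

/-- The element `g - 1 ∈ A` for `g` in the algebra group `1 + A`. -/
def sndU (g : ↥(algGrp F A)) : A := ((g : (Unitization F A)ˣ) : Unitization F A).snd

/-- The function `θ_λ(g) = θ(λ(g - 1))` on the algebra group `1 + A`. -/
def thetaFunU (θ : AddChar F ℂ) (lam : A →ₗ[F] F) : ↥(algGrp F A) → ℂ := fun g =>
  θ (lam (sndU g))

/-- The coadjoint action: `λ^g(X) = λ(g X g⁻¹)`. -/
def coadjU (g : ↥(algGrp F A)) (lam : A →ₗ[F] F) : A →ₗ[F] F where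
  toFun X := lam ((((g : (Unitization F A)ˣ) : Unitization F A) * (X : Unitization F A) *
    ((((g : (Unitization F A)ˣ))⁻¹ : (Unitization F A)ˣ) : Unitization F A)).snd)
  map_add' X Y := by
    rw [← map_add, ← Unitization.snd_add]
    refine congrArg lam (congrArg (fun u : Unitization F A => u.snd) ?_)
    rw [Unitization.inr_add]
    noncomm_ring
  map_smul' c X := by
    rw [RingHom.id_apply, ← map_smul, ← Unitization.snd_smul]
    refine congrArg lam (congrArg (fun u : Unitization F A => u.snd) ?_)
    rw [Unitization.inr_smul, mul_smul_comm, smul_mul_assoc]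

/-- The coadjoint orbit of `λ`. -/
def coadjOrbitU (lam : A →ₗ[F] F) : Set (A →ₗ[F] F) :=
  {nu | ∃ g : ↥(algGrp F A), nu = coadjU g lam}

/-- The Kirillov function `ψ_λ` of the algebra group `1 + A`. -/
def kirillovU (θ : AddChar F ℂ) (lam : A →ₗ[F] F) : ↥(algGrp F A) → ℂ := fun g =>
  ((Real.sqrt (Nat.card (coadjOrbitU lam)) : ℂ))⁻¹ *
    ∑ᶠ nu ∈ coadjOrbitU lam, thetaFunU θ nu g

/-- The underlying set of the algebra subgroup `L̄_λ = 1 + l̄_λ`. -/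
def LsetU (lam : A →ₗ[F] F) : Set ↥(algGrp F A) := {g | sndU g ∈ lbar lam}

/-- The underlying set of the algebra subgroup `S̄_λ = 1 + s̄_λ`. -/
def SsetU (lam : A →ₗ[F] F) : Set ↥(algGrp F A) := {g | sndU g ∈ sbar lam}

/-- The character `ξ_λ = Ind_{L̄_λ}^G(θ_λ)` of the algebra group `1 + A`. -/
def xiU (θ : AddChar F ℂ) (lam : A →ₗ[F] F) : ↥(algGrp F A) → ℂ :=
  indFun (LsetU lam) (thetaFunU θ lam)

/-- The set `Ξ_λ = {gλsg⁻¹ : g ∈ G, s ∈ S̄_λ}`, i.e. the functionals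
`ν(X) = λ(g⁻¹ X g s⁻¹)`. -/
def XiSet (lam : A →ₗ[F] F) : Set (A →ₗ[F] F) :=
  {nu | ∃ g s : ↥(algGrp F A), s ∈ SsetU lam ∧ ∀ X : A,
    nu X = lam (((((g : (Unitization F A)ˣ))⁻¹ : (Unitization F A)ˣ) * (X : Unitization F A) *
      ((g : (Unitization F A)ˣ) : Unitization F A) *
      ((((s : (Unitization F A)ˣ))⁻¹ : (Unitization F A)ˣ) : Unitization F A)).snd)}

end AlgebraGroup


/-- The supercharacter `χ_κ` of `A_n(q)`, given by `χ_κ(g) = q^(n-2) θ(g_{1,n})` if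
`g - 1 ∈ F_q · e_{1,n}` and `χ_κ(g) = 0` otherwise. -/
def chiKappa {F : Type} [Field F] [Fintype F] (θ : AddChar F ℂ) (n : ℕ) (hn : 1 < n) :
    ↥(grp (aAlg n F)) → ℂ := fun g =>
  if ∃ c : F, mat g - 1 = c • Matrix.single (⟨0, by omega⟩ : Fin n)
      (⟨n - 1, by omega⟩ : Fin n) (1 : F)
  then (Fintype.card F : ℂ) ^ (n - 2) * θ (mat g ⟨0, by omega⟩ ⟨n - 1, by omega⟩)
  else 0

end Paper

/-!
The algebra `a_n(q)` consists of the upper triangular Toeplitz matrices, which are fixed by the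
anti-transpose `X ↦ J Xᵀ J`; since the anti-transpose reverses products, `a_n(q)` is commutative
and `A_n(q)` is an abelian group of order `q^(n-1)`. The matrices `1 + c e_{1,n}` form a subgroup
`Z ≅ (F_q, +)` on which `θ` defines a linear character `ψ`. In a finite abelian group the linear
characters extending `ψ` are `[G : Z]` in number, and their sum is `[G : Z] ψ` on `Z` and vanishes
off `Z`; with `[A_n(q) : Z] = q^(n-2)` this sum is exactly `χ_κ`.
-/

namespace Paper

lemma isCharacter_sum_monoidHom {G : Type} [Group G] (T : Finset (G →* ℂˣ)) :
    IsCharacter fun g => ∑ φ ∈ T, (φ g : ℂ) := by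
  let diag : G →* Matrix T T ℂ := (Matrix.diagonalRingHom T ℂ).toMonoidHom.comp
    (MonoidHom.pi fun φ : T => (Units.coeHom ℂ).comp φ.1)
  refine ⟨FDRep.of (Matrix.toLinAlgEquiv'.toMonoidHom.comp diag), funext fun g => ?_⟩
  change LinearMap.trace ℂ _ (Matrix.toLin' (diag g)) = _
  rw [Matrix.trace_toLin'_eq, ← T.sum_coe_sort]
  simp [diag, Matrix.trace_diagonal]

section Extensions

variable {G : Type*} [Group G] [Finite G]

instance : NeZero (Monoid.exponent G : ℂ) :=
  ⟨Nat.cast_ne_zero.mpr Monoid.exponent_ne_zero_of_finite⟩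

instance : Fintype (G →* ℂˣ) := Fintype.ofFinite _

def extensions (H : Subgroup G) (ψ : H →* ℂˣ) : Finset (G →* ℂˣ) :=
  {φ | MonoidHom.domRestrictHom H ℂˣ φ = ψ}

variable {H : Subgroup G} {ψ : H →* ℂˣ}

lemma mem_extensions {φ : G →* ℂˣ} : φ ∈ extensions H ψ ↔ ∀ h : H, φ h = ψ h := by
  simp [extensions, MonoidHom.ext_iff]

open scoped IsMulCommutative

variable [IsMulCommutative G]

lemma card_extensions : (extensions H ψ).card = Nat.card (G ⧸ H) := by
  obtain ⟨φ₀, rfl⟩ := MonoidHom.domRestrict_surjective ℂ H ψ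
  have hfiber := MonoidHom.card_fiber_eq_of_mem_range (MonoidHom.domRestrictHom H ℂˣ)
    ⟨φ₀, rfl⟩ ⟨1, map_one _⟩
  rw [extensions, hfiber, ← CommGroup.card_domRestrictHom_ker ℂ H, Nat.card_eq_fintype_card,
    ← Fintype.card_subtype]
  exact Fintype.card_congr' rfl

lemma sum_extensions_apply_of_mem {g : G} (hg : g ∈ H) :
    ∑ φ ∈ extensions H ψ, (φ g : ℂ) = Nat.card (G ⧸ H) * ψ ⟨g, hg⟩ := by
  rw [Finset.sum_congr rfl fun φ hφ => congrArg Units.val (mem_extensions.mp hφ ⟨g, hg⟩),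
    Finset.sum_const, card_extensions, nsmul_eq_mul]

lemma sum_extensions_apply_of_notMem {g : G} (hg : g ∉ H) :
    ∑ φ ∈ extensions H ψ, (φ g : ℂ) = 0 := by
  obtain ⟨χ, hχH, hχg⟩ : ∃ χ : G →* ℂˣ, (∀ h ∈ H, χ h = 1) ∧ χ g ≠ 1 := by
    have h := mt (CommGroup.forall_monoidHom_apply_eq_one_iff ℂ H g).mp hg
    push Not at h
    exact h
  -- multiplication by `χ` permutes the extensions of `ψ`
  set s := ∑ φ ∈ extensions H ψ, (φ g : ℂ) with hs
  have hshift : s * χ g = s := by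
    rw [hs, Finset.sum_mul]
    refine Finset.sum_equiv (Equiv.mulRight χ) (fun φ => ?_) (fun φ _ => by
      rw [Equiv.coe_mulRight, MonoidHom.mul_apply, Units.val_mul])
    have hχ : ∀ h : H, χ h = 1 := fun h => hχH h h.2
    simp only [mem_extensions, Equiv.coe_mulRight, MonoidHom.mul_apply, hχ, mul_one]
  exact (mul_right_eq_self₀.mp hshift).resolve_left fun h => hχg (Units.ext h)

end Extensions

section Matrices

open scoped Matrix

variable {F : Type*} [Field F] {n : ℕ}

open Polynomial in
lemma isNilpotent_of_mem_uAlg {M : Matrix (Fin n) (Fin n) F} (hM : M ∈ uAlg n F) :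
    IsNilpotent M := by
  have hchar : M.charpoly = X ^ n := by
    rw [Matrix.charpoly_of_isUpperTriangular M fun i j hij => hM i j hij.le]
    simp [hM _ _ le_rfl]
  exact ⟨n, by simpa [hchar] using M.aeval_self_charpoly⟩

def upperToeplitz (v : Fin (n - 1) → F) : Matrix (Fin n) (Fin n) F :=
  Matrix.of fun i j => if h : i < j then v ⟨j - i - 1, by omega⟩ else 0

variable (hn : 1 < n)

/-- The matrix unit `e_{1,n}`; rows and columns are indexed from `0`. -/
def cornerUnit : Matrix (Fin n) (Fin n) F := Matrix.single ⟨0, by omega⟩ ⟨n - 1, by omega⟩ 1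

lemma cornerUnit_mul_self : cornerUnit hn * cornerUnit hn = (0 : Matrix (Fin n) (Fin n) F) :=
  Matrix.single_mul_single_of_ne (c := 1) _ _ _ (by simp only [ne_eq, Fin.mk.injEq]; omega) 1

variable [Fintype F]

lemma aCond_transpose_submatrix_rev {X : Matrix (Fin n) (Fin n) F} (hX : aCond X) :
    (X.submatrix Fin.revPerm Fin.revPerm)ᵀ = X := by
  ext i j
  simp only [Matrix.transpose_apply, Matrix.submatrix_apply, Fin.revPerm_apply]
  rcases lt_or_ge i j with hij | hji
  · exact hX.2 _ _ _ _ (Fin.rev_lt_rev.mpr hij) hij (by simp only [Fin.val_rev]; omega)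
  · rw [hX.1 _ _ (Fin.rev_le_rev.mpr hji), hX.1 _ _ hji]

lemma aCond_mul_comm {X Y : Matrix (Fin n) (Fin n) F} (hX : aCond X) (hY : aCond Y) :
    X * Y = Y * X := by
  let rev := Fin.revPerm (n := n)
  calc X * Y = ((X * Y).submatrix rev rev)ᵀ :=
        (aCond_transpose_submatrix_rev (aCond_mul hX hY)).symm
    _ = (Y.submatrix rev rev)ᵀ * (X.submatrix rev rev)ᵀ := by
        rw [← Matrix.submatrix_mul_equiv _ _ _ rev, Matrix.transpose_mul]
    _ = Y * X := by rw [aCond_transpose_submatrix_rev hX, aCond_transpose_submatrix_rev hY]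

lemma aCond_upperToeplitz (v : Fin (n - 1) → F) : aCond (upperToeplitz v) := by
  refine ⟨fun i j hji => dif_neg (not_lt.mpr hji), fun i j i' j' hij hij' hsum => ?_⟩
  simp only [upperToeplitz, Matrix.of_apply, dif_pos (Fin.lt_def.mpr hij),
    dif_pos (Fin.lt_def.mpr hij')]
  congr 2
  omega

lemma aCond_smul_cornerUnit (c : F) : aCond (c • cornerUnit hn : Matrix (Fin n) (Fin n) F) := by
  refine ⟨fun i j hji => ?_, fun i j i' j' hij hij' hsum => ?_⟩
  · rw [Matrix.smul_apply, cornerUnit, Matrix.single_apply, if_neg, smul_zero]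
    rw [Fin.le_def] at hji
    simp only [Fin.ext_iff]
    omega
  · simp only [cornerUnit, Matrix.smul_apply, Matrix.single_apply, Fin.ext_iff]
    congr 2
    apply propext
    omega

end Matrices

section AlgebraGroup

variable {F : Type*} [Field F] [Fintype F] {n : ℕ}
  {S : NonUnitalSubalgebra F (Matrix (Fin n) (Fin n) F)}

lemma mat_injective : Function.Injective (mat : grp S → Matrix (Fin n) (Fin n) F) :=
  fun _ _ h => Subtype.ext (Units.ext h)

def grpEquivOfLE (hS : S ≤ uAlg n F) : grp S ≃ S where
  toFun := gsub
  invFun X := ⟨(isNilpotent_of_mem_uAlg (hS X.2)).isUnit_one_add.unit, by simp [mem_grp_iff]⟩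
  left_inv g := mat_injective (by simp [gsub, mat])
  right_inv X := Subtype.ext (by simp [gsub, mat])

lemma mat_grpEquivOfLE_symm (hS : S ≤ uAlg n F) (X : S) :
    mat ((grpEquivOfLE hS).symm X) = 1 + X :=
  IsUnit.unit_spec _

lemma aAlg_le_uAlg : aAlg n F ≤ uAlg n F := fun _ hX => hX.1

instance : IsMulCommutative (grp (aAlg n F)) where
  is_comm := ⟨fun a b => mat_injective <| by
    change mat a * mat b = mat b * mat a
    have h : Commute (mat a - 1) (mat b - 1) := aCond_mul_comm (mat_mem a) (mat_mem b)
    simpa using ((h.add_left (Commute.one_left _)).add_right (Commute.one_right _)).eq⟩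

def aAlgEquivFirstRow : aAlg n F ≃ (Fin (n - 1) → F) where
  toFun X k := (X : Matrix (Fin n) (Fin n) F) ⟨0, by have := k.2; omega⟩
    ⟨k + 1, by have := k.2; omega⟩
  invFun v := ⟨upperToeplitz v, aCond_upperToeplitz v⟩
  left_inv X := by
    obtain ⟨hupper, htoeplitz⟩ := mem_aAlg.mp X.2
    ext i j
    simp only [upperToeplitz, Matrix.of_apply]
    split_ifs with hij
    · exact htoeplitz _ _ _ _ (by simp) hij (by simp; omega)
    · exact (hupper i j (not_lt.mp hij)).symm
  right_inv v := by
    funext k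
    simp only [upperToeplitz, Matrix.of_apply]
    rw [dif_pos (by simp [Fin.lt_def])]
    congr 1

lemma card_grp_aAlg : Nat.card (grp (aAlg n F)) = Fintype.card F ^ (n - 1) := by
  rw [Nat.card_congr ((grpEquivOfLE aAlg_le_uAlg).trans aAlgEquivFirstRow), Nat.card_fun,
    Nat.card_eq_fintype_card, Nat.card_eq_fintype_card, Fintype.card_fin]

variable (hn : 1 < n)

def cornerHom : Multiplicative F →* grp (aAlg n F) where
  toFun c := (grpEquivOfLE aAlg_le_uAlg).symm
    ⟨c.toAdd • cornerUnit hn, aCond_smul_cornerUnit hn _⟩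
  map_one' := mat_injective <| by simp [mat_grpEquivOfLE_symm]; rfl
  map_mul' a b := mat_injective <| by
    change _ = mat _ * mat _
    simp only [mat_grpEquivOfLE_symm, toAdd_mul, add_smul, mul_add, add_mul, smul_mul_smul_comm,
      cornerUnit_mul_self, smul_zero, mul_one, one_mul, add_zero, add_assoc]

lemma mat_cornerHom (c : Multiplicative F) :
    mat (cornerHom hn c) = 1 + c.toAdd • cornerUnit hn :=
  mat_grpEquivOfLE_symm _ _

lemma mat_cornerHom_apply (c : Multiplicative F) :
    mat (cornerHom hn c) ⟨0, by omega⟩ ⟨n - 1, by omega⟩ = c.toAdd := by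
  simp [mat_cornerHom, cornerUnit, Matrix.one_apply, Fin.ext_iff]
  omega

lemma cornerHom_injective : Function.Injective (cornerHom (F := F) hn) := fun a b h => by
  have h' := congrArg (fun g => mat g ⟨0, by omega⟩ ⟨n - 1, by omega⟩) h
  simp only [mat_cornerHom_apply] at h'
  exact Multiplicative.toAdd.injective h'

def cornerSubgroup : Subgroup (grp (aAlg n F)) := (cornerHom hn).range

lemma mem_cornerSubgroup_iff {g : grp (aAlg n F)} :
    g ∈ cornerSubgroup hn ↔ ∃ c : F, mat g - 1 = c • cornerUnit hn := by
  constructor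
  · rintro ⟨c, rfl⟩
    exact ⟨c.toAdd, by rw [mat_cornerHom, add_sub_cancel_left]⟩
  · rintro ⟨c, hc⟩
    exact ⟨.ofAdd c, mat_injective (by rw [mat_cornerHom, toAdd_ofAdd, ← hc, add_sub_cancel])⟩

lemma card_cornerSubgroup : Nat.card (cornerSubgroup (F := F) hn) = Fintype.card F := by
  rw [cornerSubgroup, ← Nat.card_congr (MonoidHom.ofInjective (cornerHom_injective hn)).toEquiv,
    Nat.card_eq_fintype_card, Fintype.card_multiplicative]

lemma card_quotient_cornerSubgroup :
    Nat.card (grp (aAlg n F) ⧸ cornerSubgroup (F := F) hn) = Fintype.card F ^ (n - 2) := by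
  have h := (cornerSubgroup (F := F) hn).card_eq_card_quotient_mul_card_subgroup
  rw [card_grp_aAlg, card_cornerSubgroup, show n - 1 = n - 2 + 1 by omega, pow_succ] at h
  exact (Nat.eq_of_mul_eq_mul_right Fintype.card_pos h).symm

def cornerChar (θ : AddChar F ℂ) : cornerSubgroup (F := F) hn →* ℂˣ :=
  θ.toMonoidHom.toHomUnits.comp
    (MonoidHom.ofInjective (cornerHom_injective (F := F) hn)).symm.toMonoidHom

lemma cornerChar_apply (θ : AddChar F ℂ) (z : cornerSubgroup (F := F) hn) :
    (cornerChar hn θ z : ℂ) =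
      θ (mat (z : grp (aAlg n F)) ⟨0, by omega⟩ ⟨n - 1, by omega⟩) := by
  obtain ⟨_, c, rfl⟩ := z
  have hc : (MonoidHom.ofInjective (cornerHom_injective (F := F) hn)).symm
      ⟨cornerHom hn c, c, rfl⟩ = c := (MulEquiv.symm_apply_eq _).mpr rfl
  change θ.toMonoidHom ((MonoidHom.ofInjective (cornerHom_injective (F := F) hn)).symm
    ⟨cornerHom hn c, c, rfl⟩) = _
  rw [hc, mat_cornerHom_apply, AddChar.toMonoidHom_apply]

end AlgebraGroup

theorem statement14_general (F : Type) [Field F] [Fintype F]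
    (θ : AddChar F ℂ) (n : ℕ) (hn : 1 < n) :
    IsCharacter (chiKappa θ n hn) ∧
    ∃ T : Finset (↥(grp (aAlg n F)) →* ℂˣ),
      T.card = Fintype.card F ^ (n - 2) ∧
      chiKappa θ n hn = fun g => ∑ φ ∈ T, (φ g : ℂ) := by
  set T := extensions (cornerSubgroup hn) (cornerChar hn θ)
  have hchi : chiKappa θ n hn = fun g => ∑ φ ∈ T, (φ g : ℂ) := by
    funext g
    rw [chiKappa]
    split_ifs with hg
    · rw [sum_extensions_apply_of_mem ((mem_cornerSubgroup_iff hn).mpr hg), cornerChar_apply,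
        card_quotient_cornerSubgroup]
      push_cast
      rfl
    · exact (sum_extensions_apply_of_notMem (mt (mem_cornerSubgroup_iff hn).mp hg)).symm
  refine ⟨hchi ▸ isCharacter_sum_monoidHom T, T, ?_, hchi⟩
  rw [card_extensions, card_quotient_cornerSubgroup]

/-- The function `χ_κ` is a character of `A_n(q)` and equals the sum of
`q^(n-2)` distinct group homomorphisms `A_n(q) → ℂ^×`. -/
theorem statement14 (p : ℕ) (hp : p.Prime) (F : Type) [Field F] [Fintype F] [CharP F p]
    (θ : AddChar F ℂ) (hθ : θ ≠ 1) (n : ℕ) (hn : 1 < n) :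
    IsCharacter (chiKappa θ n hn) ∧
    ∃ T : Finset (↥(grp (aAlg n F)) →* ℂˣ),
      T.card = Fintype.card F ^ (n - 2) ∧
      chiKappa θ n hn = fun g => ∑ φ ∈ T, (φ g : ℂ) :=
  statement14_general F θ n hn

end Paper
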